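/- Let G be a finite 2-connected simple graph and let H be a proper subgraph of G (a subgraph whose edge set is strictly contained in the edge set of G). Then the cycle count of H is strictly less than the cycle count of G. -/

import Mathlib

open SimpleGraph

/-- A subgraph `H` of `G` is a cycle if it is nonempty, connected, and 2-regular. -/
def IsCycleSubgraph {V : Type} {G : SimpleGraph V} (H : G.Subgraph) : Prop :=
  H.verts.Nonempty ∧ H.Connected ∧ ∀ v ∈ H.verts, (H.neighborSet v).ncard = 2

/-- The number of cycles (cycle subgraphs) of a finite simple graph. -/
noncomputable def cycleCount {V : Type} [Fintype V] (G : SimpleGraph V) : ℕ :=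
  Set.ncard {H : G.Subgraph | IsCycleSubgraph H}

/-- A finite simple graph is 2-connected (inseparable) if it has at least 3 vertices,
is connected, and deleting any single vertex leaves a connected graph (no cutvertex). -/
def IsTwoConnected {V : Type} [Fintype V] (G : SimpleGraph V) : Prop :=
  3 ≤ Fintype.card V ∧ G.Connected ∧
    ∀ v : V, (G.induce {w : V | w ≠ v}).Connected

/-!
Every edge `e` of `G` missing from `H` lies on a cycle of `G`: if `e = vw`, then `v` has a
second neighbour `x` (there is a third vertex, reachable from `v` without passing through `w`),
and `x` reaches `w` in `G - v`, which closes a cycle through `vw`. That cycle is a cycle subgraph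
of `G` but not of `H`, while every cycle subgraph of `H` is one of `G`.
-/

namespace SimpleGraph

variable {V : Type} {G H : SimpleGraph V}

lemma Walk.IsCycle.isCycleSubgraph_toSubgraph {u : V} {p : G.Walk u u} (hp : p.IsCycle) :
    IsCycleSubgraph p.toSubgraph :=
  ⟨⟨u, p.start_mem_verts_toSubgraph⟩, p.toSubgraph_connected, fun _ hv =>
    hp.ncard_neighborSet_toSubgraph_eq_two (p.mem_verts_toSubgraph.mp hv)⟩

def Subgraph.ofLE (hle : H ≤ G) (D : H.Subgraph) : G.Subgraph where
  verts := D.verts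
  Adj := D.Adj
  adj_sub hadj := hle (D.adj_sub hadj)
  edge_vert := D.edge_vert
  symm := D.symm

namespace Subgraph

lemma ofLE_injective (hle : H ≤ G) : Function.Injective (ofLE hle) := by
  intro D D' h
  have hverts : D.verts = D'.verts := congrArg (fun D : G.Subgraph => D.verts) h
  have hadj : D.Adj = D'.Adj := congrArg (fun D : G.Subgraph => D.Adj) h
  ext <;> simp only [hverts, hadj]

lemma edgeSet_ofLE (hle : H ≤ G) (D : H.Subgraph) : (ofLE hle D).edgeSet = D.edgeSet := rfl

lemma isCycleSubgraph_ofLE_iff (hle : H ≤ G) (D : H.Subgraph) :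
    IsCycleSubgraph (ofLE hle D) ↔ IsCycleSubgraph D :=
  ⟨fun ⟨hne, ⟨hconn⟩, hdeg⟩ => ⟨hne, ⟨hconn⟩, hdeg⟩,
    fun ⟨hne, ⟨hconn⟩, hdeg⟩ => ⟨hne, ⟨hconn⟩, hdeg⟩⟩

end Subgraph

lemma cycleCount_lt_of_le_of_isCycleSubgraph [Fintype V] (hle : H ≤ G) {C : G.Subgraph}
    (hC : IsCycleSubgraph C) {e : Sym2 V} (heC : e ∈ C.edgeSet) (heH : e ∉ H.edgeSet) :
    cycleCount H < cycleCount G := by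
  have hsub :
      Subgraph.ofLE hle '' {D | IsCycleSubgraph D} ⊂ {D : G.Subgraph | IsCycleSubgraph D} := by
    refine ⟨?_, fun himage => ?_⟩
    · rintro _ ⟨D, hD, rfl⟩
      exact (Subgraph.isCycleSubgraph_ofLE_iff hle D).mpr hD
    · obtain ⟨D, -, rfl⟩ := himage hC
      exact heH (D.edgeSet_subset heC)
  unfold cycleCount
  rw [← Set.ncard_image_of_injective _ (Subgraph.ofLE_injective hle)]
  exact Set.ncard_lt_ncard hsub (Set.toFinite _)

lemma reachable_deleteEdges_of_connected_induce_ne {v w x : V}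
    (hconn : (G.induce {u | u ≠ v}).Connected) (hvw : G.Adj v w) (hvx : G.Adj v x)
    (hxw : x ≠ w) :
    (G.deleteEdges {s(v, w)}).Reachable v w := by
  let f : G.induce {u | u ≠ v} →g G.deleteEdges {s(v, w)} :=
    ⟨Subtype.val, fun {a b} hab => (deleteEdges_adj).mpr
      ⟨hab, by simp [show (a : V) ≠ v from a.2, show (b : V) ≠ v from b.2]⟩⟩
  have hvx' : (G.deleteEdges {s(v, w)}).Adj v x :=
    (deleteEdges_adj).mpr ⟨hvx, by simp [hxw, hvx.ne']⟩
  obtain ⟨p⟩ := hconn.preconnected ⟨x, hvx.ne'⟩ ⟨w, hvw.ne'⟩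
  exact hvx'.reachable.trans ⟨p.map f⟩

namespace IsTwoConnected

variable [Fintype V]

lemma exists_adj_ne (hG : IsTwoConnected G) {v w : V} (hvw : G.Adj v w) :
    ∃ x, G.Adj v x ∧ x ≠ w := by
  obtain ⟨hcard, -, hdel⟩ := hG
  obtain ⟨z, hzv, hzw⟩ := ENat.exists_ne_ne_of_three_le
    (by simpa [ENat.card_eq_coe_fintype_card] using hcard) v w
  obtain ⟨p⟩ := (hdel w).preconnected ⟨v, hvw.ne⟩ ⟨z, hzw⟩
  cases p with
  | nil => exact absurd rfl hzv
  | @cons _ x _ hx _ => exact ⟨x, hx, x.2⟩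

lemma exists_isCycle_mem_edges (hG : IsTwoConnected G) {e : Sym2 V} (he : e ∈ G.edgeSet) :
    ∃ (u : V) (p : G.Walk u u), p.IsCycle ∧ e ∈ p.edges := by
  induction e using Sym2.ind with
  | _ v w =>
    obtain ⟨x, hvx, hxw⟩ := hG.exists_adj_ne he
    exact adj_and_reachable_delete_edges_iff_exists_cycle.mp
      ⟨he, reachable_deleteEdges_of_connected_induce_ne (hG.2.2 v) he hvx hxw⟩

end IsTwoConnected

end SimpleGraph

/-- A proper subgraph (one whose edge set is strictly contained in the edge set of `G`)
of a finite 2-connected simple graph `G` has strictly fewer cycles than `G`. -/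
theorem cycleCount_lt_of_proper_subgraph {V : Type} [Fintype V] (G H : SimpleGraph V)
    (hG : IsTwoConnected G) (hle : H ≤ G) (hlt : H.edgeSet ⊂ G.edgeSet) :
    cycleCount H < cycleCount G := by
  obtain ⟨e, heG, heH⟩ := Set.exists_of_ssubset hlt
  obtain ⟨u, p, hp, hep⟩ := hG.exists_isCycle_mem_edges heG
  exact cycleCount_lt_of_le_of_isCycleSubgraph hle hp.isCycleSubgraph_toSubgraph
    (p.edgeSet_toSubgraph ▸ hep) heH
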